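/- Let f, g : H → ℝ ∪ {∞} be closed, proper, convex functions on a real Hilbert space H, let γ > 0, let z* be a fixed point of T_PRS and x* := prox_{γg}(z*). Let (λ_j)_{j≥0} ⊆ (0,1) with τ := inf_j λ_j(1−λ_j) > 0, define z^{k+1} = (1−λ_k)z^k + λ_k T_PRS(z^k) from z^0 ∈ H, and set x_g^k := prox_{γg}(z^k), x_f^k := prox_{γf}(2x_g^k − z^k). Then for all k ≥ 0: −‖z^0 − z*‖·‖z* − x*‖/(2γ√(τ(k+1))) ≤ f(x_f^k) + g(x_g^k) − f(x*) − g(x*) ≤ (‖z^0 − z*‖ + ‖z* − x*‖)·‖z^0 − z*‖/(2γ√(τ(k+1))), and √(k+1)·|f(x_f^k) + g(x_g^k) − f(x*) − g(x*)| → 0 as k → ∞. -/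

import Mathlib

/-!
A point `p` minimizing `φ + ‖· - x‖² / (2γ)` satisfies the subgradient inequality
`φ p + γ⁻¹ ⟪x - p, y - p⟫ ≤ φ y`. Hence prox maps are firmly nonexpansive, the reflections
`2 prox - I` are nonexpansive, and so is `T = refl_f ∘ refl_g`. For the relaxed iteration the
residual `‖z^k - T z^k‖` is nonincreasing and `λ_k (1 - λ_k) ‖z^k - T z^k‖²` is at most the
decrease of `‖z^k - z*‖²`; summing gives `‖z^k - T z^k‖ ≤ ‖z^0 - z*‖ / √(τ (k + 1))`, and summing
only over the indices between `k / 2` and `k` gives `(k + 1) ‖z^k - T z^k‖² → 0`. Adding the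
subgradient inequalities of `f` and `g` at `x_f^k, x_g^k` and at `x*` bounds the objective gap
from both sides by multiples of `‖x_g^k - x_f^k‖ = ‖z^k - T z^k‖ / 2`.
-/

open Filter Topology Set RealInnerProductSpace

lemma le_of_forall_mem_Ioc_le_add_mul {a b c : ℝ} (h : ∀ t ∈ Ioc (0 : ℝ) 1, a ≤ b + t * c) :
    a ≤ b := by
  have hlim : Tendsto (fun t : ℝ => b + t * c) (𝓝[>] 0) (𝓝 b) := by
    have : Continuous fun t : ℝ => b + t * c := by fun_prop
    simpa using (this.tendsto 0).mono_left nhdsWithin_le_nhds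
  exact ge_of_tendsto hlim (mem_of_superset (Ioc_mem_nhdsGT one_pos) h)

section RealSequences

variable {a r : ℕ → ℝ} {τ : ℝ}

lemma succ_mul_le_sub_of_antitone (hr : Antitone r) (hτ : 0 ≤ τ)
    (h : ∀ k, τ * r k ≤ a k - a (k + 1)) (m j : ℕ) :
    ((j : ℝ) + 1) * (τ * r (m + j)) ≤ a m - a (m + j + 1) := by
  induction j with
  | zero => simpa using h m
  | succ j ih =>
    have hmono : ((j : ℝ) + 1) * (τ * r (m + j + 1)) ≤ ((j : ℝ) + 1) * (τ * r (m + j)) := by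
      gcongr
      exact hr (Nat.le_succ _)
    have := h (m + j + 1)
    rw [← add_assoc]
    push_cast
    linarith

lemma tendsto_succ_mul_of_antitone (hr : Antitone r) (hr0 : ∀ k, 0 ≤ r k) (hτ : 0 < τ)
    (ha : ∀ k, 0 ≤ a k) (h : ∀ k, τ * r k ≤ a k - a (k + 1)) :
    Tendsto (fun k : ℕ => ((k : ℝ) + 1) * r k) atTop (𝓝 0) := by
  have ha_anti : Antitone a :=
    antitone_nat_of_succ_le fun k => by nlinarith [h k, mul_nonneg hτ.le (hr0 k)]
  obtain ⟨L, hL⟩ : ∃ L, Tendsto a atTop (𝓝 L) :=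
    ⟨_, tendsto_atTop_ciInf ha_anti ⟨0, by rintro _ ⟨k, rfl⟩; exact ha k⟩⟩
  have hhalf : Tendsto (fun m : ℕ => m / 2) atTop atTop :=
    tendsto_atTop_atTop.2 fun b => ⟨2 * b, fun m hm => by omega⟩
  have hgap : Tendsto (fun m : ℕ => 2 * (a (m / 2) - a (m + 1)) / τ) atTop (𝓝 0) := by
    simpa using (((hL.comp hhalf).sub (hL.comp (tendsto_add_atTop_nat 1))).const_mul 2).div_const τ
  refine squeeze_zero (fun k => mul_nonneg (by positivity) (hr0 k)) (fun m => ?_) hgap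
  have hsum := succ_mul_le_sub_of_antitone hr hτ.le h (m / 2) (m - m / 2)
  rw [show m / 2 + (m - m / 2) = m by omega] at hsum
  have hm : (m : ℝ) + 1 ≤ 2 * (((m - m / 2 : ℕ) : ℝ) + 1) := by
    exact_mod_cast (show m + 1 ≤ 2 * ((m - m / 2) + 1) by omega)
  rw [le_div_iff₀ hτ]
  nlinarith [mul_le_mul_of_nonneg_right hm (mul_nonneg hτ.le (hr0 m))]

end RealSequences

lemma eq_of_two_smul_sub_two_smul_sub_eq {E : Type*} [AddCommGroup E] [Module ℝ E] {a b w : E}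
    (h : (2 : ℝ) • a - ((2 : ℝ) • b - w) = w) : a = b :=
  smul_right_injective E two_ne_zero ((sub_eq_iff_eq_add.1 h).trans (add_sub_cancel w _))

lemma EReal.abs_toReal_le {x : EReal} {a b : ℝ} (hax : ((-a : ℝ) : EReal) ≤ x)
    (hxb : x ≤ (b : EReal)) (hab : a ≤ b) : |x.toReal| ≤ b := by
  lift x to ℝ using ⟨ne_top_of_le_ne_top (EReal.coe_ne_top b) hxb,
    ne_bot_of_le_ne_bot (EReal.coe_ne_bot _) hax⟩
  rw [EReal.toReal_coe, abs_le]
  exact ⟨by linarith [EReal.coe_le_coe_iff.1 hax], EReal.coe_le_coe_iff.1 hxb⟩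

-- `EReal` is not an `ℝ`-module, so `ConvexOn ℝ univ φ` is not available for `φ : E → EReal`.
def ConvexEReal {E : Type*} [AddCommMonoid E] [Module ℝ E] (φ : E → EReal) : Prop :=
  ∀ x y : E, ∀ a b : ℝ, 0 ≤ a → 0 ≤ b → a + b = 1 →
    φ (a • x + b • y) ≤ (a : EReal) * φ x + (b : EReal) * φ y

def IsProxPoint {E : Type*} [SeminormedAddCommGroup E] (φ : E → EReal) (γ : ℝ) (x p : E) :
    Prop :=
  ∀ y : E, φ p + ((1 / (2 * γ) * ‖p - x‖ ^ 2 : ℝ) : EReal) ≤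
    φ y + ((1 / (2 * γ) * ‖y - x‖ ^ 2 : ℝ) : EReal)

namespace IsProxPoint

section Seminormed

variable {E : Type*} [SeminormedAddCommGroup E] {φ : E → EReal} {γ : ℝ} {x p : E}

lemma ne_top (h : IsProxPoint φ γ x p) {w : E} (hw : φ w ≠ ⊤) : φ p ≠ ⊤ := by
  intro hp
  have := h w
  rw [hp, EReal.top_add_of_ne_bot (EReal.coe_ne_bot _), top_le_iff] at this
  exact EReal.add_ne_top hw (EReal.coe_ne_top _) this

lemma toReal_add_le (h : IsProxPoint φ γ x p) (hbot : ∀ y, φ y ≠ ⊥) {w : E} {r : ℝ}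
    (hw : φ w ≤ r) :
    (φ p).toReal + 1 / (2 * γ) * ‖p - x‖ ^ 2 ≤ r + 1 / (2 * γ) * ‖w - x‖ ^ 2 := by
  have hw' : φ w ≠ ⊤ := ne_top_of_le_ne_top (EReal.coe_ne_top r) hw
  have := (h w).trans (add_le_add_left hw _)
  rw [← EReal.coe_toReal (h.ne_top hw') (hbot p)] at this
  exact_mod_cast this

end Seminormed

variable {H : Type*} [NormedAddCommGroup H] [InnerProductSpace ℝ H] {φ : H → EReal} {γ : ℝ}
  {x p : H}

theorem toReal_add_inner_le (h : IsProxPoint φ γ x p) (hbot : ∀ y, φ y ≠ ⊥)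
    (hconv : ConvexEReal φ) {y : H} (hy : φ y ≠ ⊤) :
    (φ p).toReal + γ⁻¹ * ⟪x - p, y - p⟫ ≤ (φ y).toReal := by
  set P := (φ p).toReal
  set Y := (φ y).toReal
  have hP : φ p = P := (EReal.coe_toReal (h.ne_top hy) (hbot p)).symm
  have hY : φ y = Y := (EReal.coe_toReal hy (hbot y)).symm
  -- compare `p` with the point `p + t • (y - p)` of the segment `[p, y]` and let `t → 0`
  suffices ∀ t ∈ Ioc (0 : ℝ) 1, P ≤ Y - γ⁻¹ * ⟪x - p, y - p⟫ + t * (‖y - p‖ ^ 2 / (2 * γ)) by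
    linarith [le_of_forall_mem_Ioc_le_add_mul this]
  rintro t ⟨ht0, ht1⟩
  have hseg : φ (p + t • (y - p)) ≤ ((1 - t) * P + t * Y : ℝ) := by
    have := hconv p y (1 - t) t (by linarith) ht0.le (by ring)
    rwa [show (1 - t) • p + t • y = p + t • (y - p) by module, hP, hY, ← EReal.coe_mul,
      ← EReal.coe_mul, ← EReal.coe_add] at this
  have hmin := h.toReal_add_le hbot hseg
  rw [show p + t • (y - p) - x = (p - x) + t • (y - p) by abel, norm_add_sq_real,
    real_inner_smul_right, norm_smul, mul_pow, Real.norm_eq_abs, sq_abs,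
    show ⟪p - x, y - p⟫ = -⟪x - p, y - p⟫ by rw [← inner_neg_left, neg_sub]] at hmin
  refine le_of_mul_le_mul_left ?_ ht0
  linear_combination hmin

theorem norm_sub_sq_le_inner (hp : IsProxPoint φ γ x p) {y q : H} (hq : IsProxPoint φ γ y q)
    (hbot : ∀ y, φ y ≠ ⊥) (hproper : ∃ w, φ w ≠ ⊤) (hconv : ConvexEReal φ) (hγ : 0 < γ) :
    ‖p - q‖ ^ 2 ≤ ⟪p - q, x - y⟫ := by
  obtain ⟨w, hw⟩ := hproper
  have hpq := hp.toReal_add_inner_le hbot hconv (hq.ne_top hw)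
  have hqp := hq.toReal_add_inner_le hbot hconv (hp.ne_top hw)
  have hsum : ⟪x - p, q - p⟫ + ⟪y - q, p - q⟫ = ‖p - q‖ ^ 2 - ⟪p - q, x - y⟫ := by
    rw [← real_inner_self_eq_norm_sq]
    simp only [inner_sub_left, inner_sub_right, real_inner_comm]
    ring
  have : γ⁻¹ * (‖p - q‖ ^ 2 - ⟪p - q, x - y⟫) ≤ 0 := by linear_combination hpq + hqp - γ⁻¹ * hsum
  nlinarith [inv_pos.2 hγ]

end IsProxPoint

section InnerProduct

variable {H : Type*} [NormedAddCommGroup H] [InnerProductSpace ℝ H]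

lemma norm_two_smul_sub_sub_two_smul_sub_le {x y p q : H} (h : ‖p - q‖ ^ 2 ≤ ⟪p - q, x - y⟫) :
    ‖((2 : ℝ) • p - x) - ((2 : ℝ) • q - y)‖ ≤ ‖x - y‖ := by
  refine (pow_le_pow_iff_left₀ (norm_nonneg _) (norm_nonneg _) two_ne_zero).1 ?_
  rw [show (2 : ℝ) • p - x - ((2 : ℝ) • q - y) = (2 : ℝ) • (p - q) - (x - y) by module,
    norm_sub_sq_real, norm_smul, real_inner_smul_left, Real.norm_two]
  linear_combination 4 * h

lemma lipschitzWith_one_two_smul_prox_sub {φ : H → EReal} {γ : ℝ} {P : H → H}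
    (hP : ∀ x, IsProxPoint φ γ x (P x)) (hbot : ∀ y, φ y ≠ ⊥) (hproper : ∃ w, φ w ≠ ⊤)
    (hconv : ConvexEReal φ) (hγ : 0 < γ) :
    LipschitzWith 1 fun x => (2 : ℝ) • P x - x :=
  LipschitzWith.mk_one fun x y => by
    simpa only [dist_eq_norm] using norm_two_smul_sub_sub_two_smul_sub_le
      ((hP x).norm_sub_sq_le_inner (hP y) hbot hproper hconv hγ)

lemma norm_one_sub_smul_add_smul_sub_sq (t : ℝ) (u w v : H) :
    ‖(1 - t) • u + t • w - v‖ ^ 2 =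
      (1 - t) * ‖u - v‖ ^ 2 + t * ‖w - v‖ ^ 2 - t * (1 - t) * ‖u - w‖ ^ 2 := by
  rw [show (1 - t) • u + t • w - v = (1 - t) • (u - v) + t • (w - v) by module,
    show u - w = (u - v) - (w - v) by abel]
  generalize u - v = a, w - v = b
  rw [norm_add_sq_real, norm_sub_sq_real, norm_smul, norm_smul, real_inner_smul_left,
    real_inner_smul_right, mul_pow, mul_pow, Real.norm_eq_abs, Real.norm_eq_abs, sq_abs, sq_abs]
  ring

namespace LipschitzWith

variable {T : H → H} {t : ℝ}

lemma norm_relaxed_sub_sq_add_le (hT : LipschitzWith 1 T) {v : H} (hv : T v = v) (ht : 0 ≤ t)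
    (u : H) :
    ‖(1 - t) • u + t • T u - v‖ ^ 2 + t * (1 - t) * ‖u - T u‖ ^ 2 ≤ ‖u - v‖ ^ 2 := by
  have hTu : ‖T u - v‖ ≤ ‖u - v‖ := by
    simpa [dist_eq_norm, hv] using hT.dist_le_mul u v
  rw [norm_one_sub_smul_add_smul_sub_sq]
  linarith [mul_le_mul_of_nonneg_left (pow_le_pow_left₀ (norm_nonneg _) hTu 2) ht]

lemma norm_relaxed_sub_apply_le (hT : LipschitzWith 1 T) (ht : t ∈ Icc (0 : ℝ) 1) (u : H) :
    ‖(1 - t) • u + t • T u - T ((1 - t) • u + t • T u)‖ ≤ ‖u - T u‖ := by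
  set w := (1 - t) • u + t • T u
  have hTw : ‖T u - T w‖ ≤ ‖u - w‖ := by simpa [dist_eq_norm] using hT.dist_le_mul u w
  calc ‖w - T w‖ = ‖(w - T u) + (T u - T w)‖ := by rw [sub_add_sub_cancel]
    _ ≤ ‖w - T u‖ + ‖u - w‖ := (norm_add_le _ _).trans (by gcongr)
    _ = (1 - t) * ‖u - T u‖ + t * ‖u - T u‖ := by
      rw [show w - T u = (1 - t) • (u - T u) by module, show u - w = t • (u - T u) by module,
        norm_smul, norm_smul, Real.norm_of_nonneg (sub_nonneg.2 ht.2), Real.norm_of_nonneg ht.1]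
    _ = ‖u - T u‖ := by ring

end LipschitzWith

section KrasnoselskiiMann

variable {T : H → H} {z : ℕ → H} {lam : ℕ → ℝ} {v : H} {τ : ℝ}

lemma antitone_sq_norm_sub_apply_of_relaxed (hT : LipschitzWith 1 T)
    (hz : ∀ k, z (k + 1) = (1 - lam k) • z k + lam k • T (z k))
    (hlam : ∀ k, lam k ∈ Icc (0 : ℝ) 1) :
    Antitone fun k => ‖z k - T (z k)‖ ^ 2 :=
  antitone_nat_of_succ_le fun k => pow_le_pow_left₀ (norm_nonneg _)
    (by simpa only [hz k] using hT.norm_relaxed_sub_apply_le (hlam k) (z k)) 2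

lemma sq_norm_sub_apply_le_of_relaxed (hT : LipschitzWith 1 T) (hv : T v = v)
    (hz : ∀ k, z (k + 1) = (1 - lam k) • z k + lam k • T (z k))
    (hlam : ∀ k, lam k ∈ Icc (0 : ℝ) 1)
    (hτ : ∀ k, τ ≤ lam k * (1 - lam k)) (k : ℕ) :
    τ * ‖z k - T (z k)‖ ^ 2 ≤ ‖z k - v‖ ^ 2 - ‖z (k + 1) - v‖ ^ 2 := by
  have := hT.norm_relaxed_sub_sq_add_le hv (hlam k).1 (z k)
  rw [← hz k] at this
  nlinarith [mul_le_mul_of_nonneg_right (hτ k) (sq_nonneg ‖z k - T (z k)‖)]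

lemma norm_sub_apply_le_of_relaxed (hT : LipschitzWith 1 T) (hv : T v = v)
    (hz : ∀ k, z (k + 1) = (1 - lam k) • z k + lam k • T (z k))
    (hlam : ∀ k, lam k ∈ Icc (0 : ℝ) 1)
    (hτ0 : 0 < τ) (hτ : ∀ k, τ ≤ lam k * (1 - lam k)) (k : ℕ) :
    ‖z k - T (z k)‖ ≤ ‖z 0 - v‖ / √(τ * (k + 1)) := by
  have hsum := succ_mul_le_sub_of_antitone (antitone_sq_norm_sub_apply_of_relaxed hT hz hlam)
    hτ0.le (sq_norm_sub_apply_le_of_relaxed hT hv hz hlam hτ) 0 k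
  rw [zero_add] at hsum
  rw [le_div_iff₀ (by positivity), ← Real.sqrt_sq (norm_nonneg (z k - T (z k))),
    ← Real.sqrt_mul (sq_nonneg _), ← Real.sqrt_sq (norm_nonneg (z 0 - v))]
  exact Real.sqrt_le_sqrt (by nlinarith [sq_nonneg ‖z (k + 1) - v‖])

lemma tendsto_sqrt_mul_norm_sub_apply_of_relaxed (hT : LipschitzWith 1 T) (hv : T v = v)
    (hz : ∀ k, z (k + 1) = (1 - lam k) • z k + lam k • T (z k))
    (hlam : ∀ k, lam k ∈ Icc (0 : ℝ) 1)
    (hτ0 : 0 < τ) (hτ : ∀ k, τ ≤ lam k * (1 - lam k)) :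
    Tendsto (fun k : ℕ => √((k : ℝ) + 1) * ‖z k - T (z k)‖) atTop (𝓝 0) := by
  have := (tendsto_succ_mul_of_antitone (antitone_sq_norm_sub_apply_of_relaxed hT hz hlam)
    (fun k => sq_nonneg _) hτ0 (fun k => sq_nonneg _)
    (sq_norm_sub_apply_le_of_relaxed hT hv hz hlam hτ)).sqrt
  simpa [Real.sqrt_mul', Real.sqrt_sq, norm_nonneg] using this

lemma norm_sub_le_of_relaxed (hT : LipschitzWith 1 T) (hv : T v = v)
    (hz : ∀ k, z (k + 1) = (1 - lam k) • z k + lam k • T (z k))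
    (hlam : ∀ k, lam k ∈ Icc (0 : ℝ) 1)
    (k : ℕ) : ‖z k - v‖ ≤ ‖z 0 - v‖ := by
  have : Antitone fun k => ‖z k - v‖ := antitone_nat_of_succ_le fun k => by
    have := hT.norm_relaxed_sub_sq_add_le hv (hlam k).1 (z k)
    rw [← hz k] at this
    refine (pow_le_pow_iff_left₀ (norm_nonneg _) (norm_nonneg _) two_ne_zero).1 ?_
    nlinarith [mul_nonneg (mul_nonneg (hlam k).1 (sub_nonneg.2 (hlam k).2))
      (sq_nonneg ‖z k - T (z k)‖)]
  exact this (Nat.zero_le k)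

end KrasnoselskiiMann

section PeacemanRachford

variable {f g : H → EReal} {γ : ℝ}

theorem add_sub_add_le_of_isProxPoint (hf_bot : ∀ x, f x ≠ ⊥) (hg_bot : ∀ x, g x ≠ ⊥)
    (hf_conv : ConvexEReal f) (hg_conv : ConvexEReal g) (hγ : 0 < γ) {z p q x : H}
    (hp : IsProxPoint g γ z p) (hq : IsProxPoint f γ ((2 : ℝ) • p - z) q)
    (hfx : f x ≠ ⊤) (hgx : g x ≠ ⊤) :
    f q + g p - (f x + g x) ≤ ((‖p - q‖ * ‖z - x‖ / γ : ℝ) : EReal) := by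
  have hgp := hp.toReal_add_inner_le hg_bot hg_conv hgx
  have hfq := hq.toReal_add_inner_le hf_bot hf_conv hfx
  have hid : ⟪z - p, x - p⟫ + ⟪(2 : ℝ) • p - z - q, x - q⟫ = ‖p - q‖ ^ 2 - ⟪p - q, z - x⟫ := by
    rw [← real_inner_self_eq_norm_sq]
    simp only [inner_sub_left, inner_sub_right, real_inner_smul_right, real_inner_comm]
    ring
  have hcs := mul_le_mul_of_nonneg_left (real_inner_le_norm (p - q) (z - x)) (inv_pos.2 hγ).le
  have hsq := mul_nonneg (inv_pos.2 hγ).le (sq_nonneg ‖p - q‖)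
  rw [← EReal.coe_toReal (hq.ne_top hfx) (hf_bot q), ← EReal.coe_toReal (hp.ne_top hgx) (hg_bot p),
    ← EReal.coe_toReal hfx (hf_bot x), ← EReal.coe_toReal hgx (hg_bot x)]
  norm_cast
  linear_combination hgp + hfq - γ⁻¹ * hid + hcs + hsq

theorem le_add_sub_add_of_isProxPoint (hf_bot : ∀ x, f x ≠ ⊥) (hg_bot : ∀ x, g x ≠ ⊥)
    (hf_conv : ConvexEReal f) (hg_conv : ConvexEReal g) (hγ : 0 < γ) {z x p q : H}
    (hgx : IsProxPoint g γ z x) (hfx : IsProxPoint f γ ((2 : ℝ) • x - z) x)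
    (hfq : f q ≠ ⊤) (hgp : g p ≠ ⊤) :
    ((-(‖z - x‖ * ‖p - q‖ / γ) : ℝ) : EReal) ≤ f q + g p - (f x + g x) := by
  have hg := hgx.toReal_add_inner_le hg_bot hg_conv hgp
  have hf := hfx.toReal_add_inner_le hf_bot hf_conv hfq
  have hid : ⟪z - x, p - x⟫ + ⟪(2 : ℝ) • x - z - x, q - x⟫ = ⟪z - x, p - q⟫ := by
    simp only [inner_sub_left, inner_sub_right, real_inner_smul_right, real_inner_comm]
    ring
  have hcs := mul_le_mul_of_nonneg_left
    (neg_le_of_abs_le (abs_real_inner_le_norm (z - x) (p - q))) (inv_pos.2 hγ).le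
  rw [← EReal.coe_toReal hfq (hf_bot q), ← EReal.coe_toReal hgp (hg_bot p),
    ← EReal.coe_toReal (hfx.ne_top hfq) (hf_bot x), ← EReal.coe_toReal (hgx.ne_top hgp) (hg_bot x)]
  norm_cast
  linear_combination hg + hf - γ⁻¹ * hid + hcs

theorem add_sub_add_mem_Icc_of_isProxPoint (hf_bot : ∀ x, f x ≠ ⊥) (hg_bot : ∀ x, g x ≠ ⊥)
    (hf_proper : ∃ x, f x ≠ ⊤) (hg_proper : ∃ x, g x ≠ ⊤) (hf_conv : ConvexEReal f)
    (hg_conv : ConvexEReal g) (hγ : 0 < γ) {z p q zs xs : H}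
    (hp : IsProxPoint g γ z p) (hq : IsProxPoint f γ ((2 : ℝ) • p - z) q)
    (hgs : IsProxPoint g γ zs xs) (hfs : IsProxPoint f γ ((2 : ℝ) • xs - zs) xs) :
    f q + g p - (f xs + g xs) ∈ Icc ((-(‖zs - xs‖ * ‖p - q‖ / γ) : ℝ) : EReal)
      ((‖p - q‖ * (‖z - zs‖ + ‖zs - xs‖) / γ : ℝ) : EReal) := by
  have hf_xs := hfs.ne_top hf_proper.choose_spec
  have hg_xs := hgs.ne_top hg_proper.choose_spec
  refine ⟨le_add_sub_add_of_isProxPoint hf_bot hg_bot hf_conv hg_conv hγ hgs hfs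
    (hq.ne_top hf_xs) (hp.ne_top hg_xs), ?_⟩
  refine (add_sub_add_le_of_isProxPoint hf_bot hg_bot hf_conv hg_conv hγ hp hq hf_xs hg_xs).trans
    (EReal.coe_le_coe_iff.2 ?_)
  gcongr
  exact norm_sub_le_norm_sub_add_norm_sub _ _ _

lemma lipschitzWith_one_peacemanRachford {proxf proxg : H → H}
    (hprf : ∀ x, IsProxPoint f γ x (proxf x)) (hprg : ∀ x, IsProxPoint g γ x (proxg x))
    (hf_bot : ∀ x, f x ≠ ⊥) (hg_bot : ∀ x, g x ≠ ⊥) (hf_proper : ∃ x, f x ≠ ⊤)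
    (hg_proper : ∃ x, g x ≠ ⊤) (hf_conv : ConvexEReal f) (hg_conv : ConvexEReal g) (hγ : 0 < γ) :
    LipschitzWith 1 fun w => (2 : ℝ) • proxf ((2 : ℝ) • proxg w - w) - ((2 : ℝ) • proxg w - w) := by
  simpa only [mul_one, Function.comp_def] using
    (lipschitzWith_one_two_smul_prox_sub hprf hf_bot hf_proper hf_conv hγ).comp
      (lipschitzWith_one_two_smul_prox_sub hprg hg_bot hg_proper hg_conv hγ)

end PeacemanRachford

end InnerProduct

theorem relaxed_prs_nonergodic_convergence_general
    {H : Type*} [NormedAddCommGroup H] [InnerProductSpace ℝ H]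
    (f g : H → EReal)
    (hf_bot : ∀ x, f x ≠ ⊥) (hg_bot : ∀ x, g x ≠ ⊥)
    (hf_proper : ∃ x, f x ≠ ⊤) (hg_proper : ∃ x, g x ≠ ⊤)
    (hf_conv : ∀ x y : H, ∀ a b : ℝ, 0 ≤ a → 0 ≤ b → a + b = 1 →
      f (a • x + b • y) ≤ (a : EReal) * f x + (b : EReal) * f y)
    (hg_conv : ∀ x y : H, ∀ a b : ℝ, 0 ≤ a → 0 ≤ b → a + b = 1 →
      g (a • x + b • y) ≤ (a : EReal) * g x + (b : EReal) * g y)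
    (γ : ℝ) (hγ : 0 < γ)
    (proxf proxg : H → H)
    (hproxf : ∀ x p : H, proxf x = p ↔
      ∀ y : H, f p + ((1 / (2 * γ) * ‖p - x‖ ^ 2 : ℝ) : EReal) ≤
        f y + ((1 / (2 * γ) * ‖y - x‖ ^ 2 : ℝ) : EReal))
    (hproxg : ∀ x p : H, proxg x = p ↔
      ∀ y : H, g p + ((1 / (2 * γ) * ‖p - x‖ ^ 2 : ℝ) : EReal) ≤
        g y + ((1 / (2 * γ) * ‖y - x‖ ^ 2 : ℝ) : EReal))
    (T : H → H)
    (hT : ∀ w : H, T w = (2 : ℝ) • proxf ((2 : ℝ) • proxg w - w) - ((2 : ℝ) • proxg w - w))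
    (zstar : H) (hzstar : T zstar = zstar)
    (xstar : H) (hxstar : xstar = proxg zstar)
    (lam : ℕ → ℝ) (hlam : ∀ k, lam k ∈ Set.Ioo (0 : ℝ) 1)
    (τ : ℝ) (hτ0 : 0 < τ) (hτ : ∀ j, τ ≤ lam j * (1 - lam j))
    (z : ℕ → H) (hz : ∀ k, z (k + 1) = (1 - lam k) • z k + lam k • T (z k))
    (xg xf : ℕ → H)
    (hxg : ∀ k, xg k = proxg (z k))
    (hxf : ∀ k, xf k = proxf ((2 : ℝ) • xg k - z k)) :
    (∀ k : ℕ,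
      ((-(‖z 0 - zstar‖ * ‖zstar - xstar‖ /
          (2 * γ * Real.sqrt (τ * ((k : ℝ) + 1)))) : ℝ) : EReal) ≤
        f (xf k) + g (xg k) - (f xstar + g xstar) ∧
      f (xf k) + g (xg k) - (f xstar + g xstar) ≤
        (((‖z 0 - zstar‖ + ‖zstar - xstar‖) * ‖z 0 - zstar‖ /
          (2 * γ * Real.sqrt (τ * ((k : ℝ) + 1))) : ℝ) : EReal)) ∧
    Filter.Tendsto
      (fun k : ℕ => Real.sqrt ((k : ℝ) + 1) *
        |(f (xf k) + g (xg k) - (f xstar + g xstar)).toReal|)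
      Filter.atTop (nhds 0) := by
  have hprf (x : H) : IsProxPoint f γ x (proxf x) := (hproxf x _).1 rfl
  have hprg (x : H) : IsProxPoint g γ x (proxg x) := (hproxg x _).1 rfl
  have hT_lip : LipschitzWith 1 T := funext hT ▸ lipschitzWith_one_peacemanRachford hprf hprg
    hf_bot hg_bot hf_proper hg_proper hf_conv hg_conv hγ
  have hxf_star : IsProxPoint f γ ((2 : ℝ) • xstar - zstar) xstar := by
    have h := hT zstar
    rw [hzstar, ← hxstar] at h
    exact (hproxf _ _).1 (eq_of_two_smul_sub_two_smul_sub_eq h.symm)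
  have hlam' (k : ℕ) : lam k ∈ Icc (0 : ℝ) 1 := Ioo_subset_Icc_self (hlam k)
  have hres (k : ℕ) : ‖z k - T (z k)‖ = 2 * ‖xg k - xf k‖ := by
    rw [hT, ← hxg, ← hxf, show z k - ((2 : ℝ) • xf k - ((2 : ℝ) • xg k - z k)) =
      (2 : ℝ) • (xg k - xf k) by module, norm_smul, Real.norm_two]
  set D := ‖z 0 - zstar‖
  set E := ‖zstar - xstar‖
  have hgap (k : ℕ) := add_sub_add_mem_Icc_of_isProxPoint hf_bot hg_bot hf_proper hg_proper
    hf_conv hg_conv hγ (hxg k ▸ hprg (z k)) (hxf k ▸ hprf _) (hxstar ▸ hprg zstar) hxf_star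
  have hdist (k : ℕ) : ‖z k - zstar‖ ≤ D := norm_sub_le_of_relaxed hT_lip hzstar hz hlam' k
  have hrate (k : ℕ) : 2 * ‖xg k - xf k‖ ≤ D / √(τ * (k + 1)) :=
    hres k ▸ norm_sub_apply_le_of_relaxed hT_lip hzstar hz hlam' hτ0 hτ k
  refine ⟨fun k => ⟨(EReal.coe_le_coe_iff.2 ?_).trans (hgap k).1,
    (hgap k).2.trans (EReal.coe_le_coe_iff.2 ?_)⟩, ?_⟩
  · calc -(D * E / (2 * γ * √(τ * (k + 1)))) = -(E * (D / √(τ * (k + 1))) / (2 * γ)) := by ring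
      _ ≤ -(E * (2 * ‖xg k - xf k‖) / (2 * γ)) := by gcongr; exact hrate k
      _ = -(E * ‖xg k - xf k‖ / γ) := by field_simp
  · calc ‖xg k - xf k‖ * (‖z k - zstar‖ + E) / γ
          = 2 * ‖xg k - xf k‖ * (‖z k - zstar‖ + E) / (2 * γ) := by field_simp
      _ ≤ D / √(τ * (k + 1)) * (D + E) / (2 * γ) := by gcongr; exacts [hrate k, hdist k]
      _ = (D + E) * D / (2 * γ * √(τ * (k + 1))) := by ring
  · have hlim := (tendsto_sqrt_mul_norm_sub_apply_of_relaxed hT_lip hzstar hz hlam' hτ0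
      hτ).const_mul ((D + E) / (2 * γ))
    rw [mul_zero] at hlim
    refine squeeze_zero (fun k => by positivity) (fun k => ?_) hlim
    have habs : |(f (xf k) + g (xg k) - (f xstar + g xstar)).toReal| ≤
        ‖xg k - xf k‖ * (D + E) / γ :=
      EReal.abs_toReal_le (hgap k).1 ((hgap k).2.trans
        (EReal.coe_le_coe_iff.2 (by gcongr; exact hdist k)))
        (by rw [mul_comm E]; gcongr; exact le_add_of_nonneg_left (norm_nonneg _))
    calc √((k : ℝ) + 1) * |(f (xf k) + g (xg k) - (f xstar + g xstar)).toReal|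
        ≤ √((k : ℝ) + 1) * (‖xg k - xf k‖ * (D + E) / γ) := by gcongr
      _ = (D + E) / (2 * γ) * (√((k : ℝ) + 1) * ‖z k - T (z k)‖) := by
          rw [hres k]
          field_simp

/-- Theorem (nonergodic convergence of relaxed PRS): for closed, proper, convex
`f, g : H → ℝ ∪ {∞}`, `γ > 0`, a fixed point `z*` of `T_PRS` with `x* = prox_{γg}(z*)`,
relaxations `λ_k ∈ (0,1)` with `τ ≤ λ_k(1−λ_k)` for some `τ > 0`, iterates
`z^{k+1} = (1−λ_k)z^k + λ_k T_PRS z^k`, `x_g^k = prox_{γg}(z^k)`,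
`x_f^k = prox_{γf}(2x_g^k − z^k)`, for all `k`:
`−‖z^0−z*‖‖z*−x*‖/(2γ√(τ(k+1))) ≤ f(x_f^k)+g(x_g^k)−f(x*)−g(x*) ≤
 (‖z^0−z*‖+‖z*−x*‖)‖z^0−z*‖/(2γ√(τ(k+1)))`, and
`√(k+1)·|f(x_f^k)+g(x_g^k)−f(x*)−g(x*)| → 0`. -/
theorem relaxed_prs_nonergodic_convergence
    {H : Type*} [NormedAddCommGroup H] [InnerProductSpace ℝ H] [CompleteSpace H]
    (f g : H → EReal)
    (hf_bot : ∀ x, f x ≠ ⊥) (hg_bot : ∀ x, g x ≠ ⊥)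
    (hf_proper : ∃ x, f x ≠ ⊤) (hg_proper : ∃ x, g x ≠ ⊤)
    (hf_lsc : LowerSemicontinuous f) (hg_lsc : LowerSemicontinuous g)
    (hf_conv : ∀ x y : H, ∀ a b : ℝ, 0 ≤ a → 0 ≤ b → a + b = 1 →
      f (a • x + b • y) ≤ (a : EReal) * f x + (b : EReal) * f y)
    (hg_conv : ∀ x y : H, ∀ a b : ℝ, 0 ≤ a → 0 ≤ b → a + b = 1 →
      g (a • x + b • y) ≤ (a : EReal) * g x + (b : EReal) * g y)
    (γ : ℝ) (hγ : 0 < γ)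
    (proxf proxg : H → H)
    (hproxf : ∀ x p : H, proxf x = p ↔
      ∀ y : H, f p + ((1 / (2 * γ) * ‖p - x‖ ^ 2 : ℝ) : EReal) ≤
        f y + ((1 / (2 * γ) * ‖y - x‖ ^ 2 : ℝ) : EReal))
    (hproxg : ∀ x p : H, proxg x = p ↔
      ∀ y : H, g p + ((1 / (2 * γ) * ‖p - x‖ ^ 2 : ℝ) : EReal) ≤
        g y + ((1 / (2 * γ) * ‖y - x‖ ^ 2 : ℝ) : EReal))
    (T : H → H)
    (hT : ∀ w : H, T w = (2 : ℝ) • proxf ((2 : ℝ) • proxg w - w) - ((2 : ℝ) • proxg w - w))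
    (zstar : H) (hzstar : T zstar = zstar)
    (xstar : H) (hxstar : xstar = proxg zstar)
    (lam : ℕ → ℝ) (hlam : ∀ k, lam k ∈ Set.Ioo (0 : ℝ) 1)
    (τ : ℝ) (hτ0 : 0 < τ) (hτ : ∀ j, τ ≤ lam j * (1 - lam j))
    (z : ℕ → H) (hz : ∀ k, z (k + 1) = (1 - lam k) • z k + lam k • T (z k))
    (xg xf : ℕ → H)
    (hxg : ∀ k, xg k = proxg (z k))
    (hxf : ∀ k, xf k = proxf ((2 : ℝ) • xg k - z k)) :
    (∀ k : ℕ,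
      ((-(‖z 0 - zstar‖ * ‖zstar - xstar‖ /
          (2 * γ * Real.sqrt (τ * ((k : ℝ) + 1)))) : ℝ) : EReal) ≤
        f (xf k) + g (xg k) - (f xstar + g xstar) ∧
      f (xf k) + g (xg k) - (f xstar + g xstar) ≤
        (((‖z 0 - zstar‖ + ‖zstar - xstar‖) * ‖z 0 - zstar‖ /
          (2 * γ * Real.sqrt (τ * ((k : ℝ) + 1))) : ℝ) : EReal)) ∧
    Filter.Tendsto
      (fun k : ℕ => Real.sqrt ((k : ℝ) + 1) *
        |(f (xf k) + g (xg k) - (f xstar + g xstar)).toReal|)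
      Filter.atTop (nhds 0) :=
  relaxed_prs_nonergodic_convergence_general f g hf_bot hg_bot hf_proper hg_proper hf_conv hg_conv γ
    hγ proxf proxg hproxf hproxg T hT zstar hzstar xstar hxstar lam hlam τ hτ0 hτ z hz xg xf hxg hxf
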